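/- arXiv:1001.2051 — 2 statements merged into one kernel-verified Lean document; each statement's English description precedes it below -/
import Mathlib

section
/- Let G be a group, A → B a surjective homomorphism of commutative rings with kernel I satisfying I² = 0, and ρ: G → GL_d(B) a group homomorphism. Regard M_d(I) (d×d matrices with entries in I) as a G-module where g acts by m ↦ ρ(g)·m·ρ(g)⁻¹ (well-defined since I² = 0 makes I a B-module). Choose any set-theoretic lift ρ̃: G → M_d(A) with entrywise reduction equal to ρ (such values are automatically invertible). Then c(g₁, g₂) := ρ̃(g₁g₂)ρ̃(g₂)⁻¹ρ̃(g₁)⁻¹ − 1 takes values in M_d(I) and is a 2-cocycle; its class [c] ∈ H²(G, M_d(I)) depends only on ρ and not on the chosen lift ρ̃; and [c] = 0 if and only if there exists a group homomorphism G → GL_d(A) lifting ρ. In particular, if H²(G, M_d(I)) = 0 then every homomorphism ρ: G → GL_d(B) lifts to a homomorphism G → GL_d(A). -/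
/-!
Everything happens in a ring `R` with a square-zero two-sided ideal `J = ker (F : R →+* S)`;
the theorem is the case `R = M_d(A)`, `J = M_d(I)`. Elements `1 + j` with `j ∈ J` are units
and multiply additively, `(1 + a)(1 + b) = 1 + (a + b)`. A lift `σ` of `ρ` takes unit values
(`σ(g)σ(g⁻¹) ∈ 1 + J`), and its defect `σ(g₁g₂) = (1 + c(g₁, g₂)) σ(g₁) σ(g₂)` lies in `J`.
Expanding `σ(g₁g₂g₃)` along both bracketings gives the cocycle identity. Any other lift is
`(1 + β) σ` with `β` valued in `J`, and its defect is `c - δβ`; so the class of `c` does not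
depend on the lift, and the lifts that are homomorphisms are the `(1 + β) σ` with `δβ = c`.
-/

open Matrix

section

variable (G : Type) [Group G] (d : ℕ) (A B : Type) [CommRing A] [CommRing B]

/-- The obstruction 2-cochain associated to a set-theoretic lift `ρt` of a
representation. -/
noncomputable def obstruction (ρt : G → Matrix (Fin d) (Fin d) A) :
    G → G → Matrix (Fin d) (Fin d) A :=
  fun g₁ g₂ => ρt (g₁ * g₂) * (ρt g₂)⁻¹ * (ρt g₁)⁻¹ - 1

end

open scoped Ring

section SquareZeroIdeal

variable {R : Type*} [Ring R] {J : Ideal R}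

theorem isUnit_one_add_of_mem (hJ : ∀ x ∈ J, ∀ y ∈ J, x * y = 0) {a : R} (ha : a ∈ J) :
    IsUnit (1 + a) :=
  IsNilpotent.isUnit_one_add ⟨2, by rw [sq]; exact hJ a ha a ha⟩

theorem isUnit_of_mul_sub_one_mem (hJ : ∀ x ∈ J, ∀ y ∈ J, x * y = 0) {x y : R}
    (hxy : x * y - 1 ∈ J) (hyx : y * x - 1 ∈ J) : IsUnit x := by
  have hxy' : IsUnit (x * y) := by simpa using isUnit_one_add_of_mem hJ hxy
  have hyx' : IsUnit (y * x) := by simpa using isUnit_one_add_of_mem hJ hyx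
  refine isUnit_iff_exists_and_exists.mpr ⟨⟨y * (x * y)⁻¹ʳ, ?_⟩, ⟨(y * x)⁻¹ʳ * y, ?_⟩⟩
  · rw [← mul_assoc, Ring.mul_inverse_cancel _ hxy']
  · rw [mul_assoc, Ring.inverse_mul_cancel _ hyx']

theorem one_add_mul_one_add_of_mem (hJ : ∀ x ∈ J, ∀ y ∈ J, x * y = 0) {a b : R}
    (ha : a ∈ J) (hb : b ∈ J) : (1 + a) * (1 + b) = 1 + (a + b) := by
  rw [add_mul, mul_add, mul_add, hJ a ha b hb]; noncomm_ring

theorem mul_one_add_eq {x : R} (hx : IsUnit x) (m : R) :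
    x * (1 + m) = (1 + x * m * x⁻¹ʳ) * x := by
  rw [add_mul, one_mul, Ring.inverse_mul_cancel_right _ _ hx, mul_add, mul_one]

theorem mul_mul_inverse_eq_of_sub_mem [J.IsTwoSided] (hJ : ∀ x ∈ J, ∀ y ∈ J, x * y = 0)
    {x y m : R} (hx : IsUnit x) (hy : IsUnit y) (hxy : x - y ∈ J) (hm : m ∈ J) :
    x * m * x⁻¹ʳ = y * m * y⁻¹ʳ := by
  have hleft : x * m = y * m := sub_eq_zero.mp (by rw [← sub_mul]; exact hJ _ hxy m hm)
  have hright : m * x⁻¹ʳ = m * y⁻¹ʳ := by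
    have hyx : y - x ∈ J := sub_mem_comm_iff.mp hxy
    calc m * x⁻¹ʳ = m * x⁻¹ʳ * y * y⁻¹ʳ := (Ring.mul_inverse_cancel_right _ _ hy).symm
      _ = (m * x⁻¹ʳ * x + m * x⁻¹ʳ * (y - x)) * y⁻¹ʳ := by noncomm_ring
      _ = m * y⁻¹ʳ := by
        rw [hJ _ (J.mul_mem_right _ hm) _ hyx, add_zero, Ring.inverse_mul_cancel_right _ _ hx]
  rw [hleft, mul_assoc, hright, ← mul_assoc]

end SquareZeroIdeal

section Cochains

variable {G R : Type*} [Group G] [Ring R]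

noncomputable def liftObstruction (σ : G → R) (g₁ g₂ : G) : R :=
  σ (g₁ * g₂) * (σ g₂)⁻¹ʳ * (σ g₁)⁻¹ʳ - 1

noncomputable def conjCoboundary (σ b : G → R) (g₁ g₂ : G) : R :=
  σ g₁ * b g₂ * (σ g₁)⁻¹ʳ - b (g₁ * g₂) + b g₁

def IsConjTwoCocycle (σ : G → R) (z : G → G → R) : Prop :=
  ∀ g₁ g₂ g₃, σ g₁ * z g₂ g₃ * (σ g₁)⁻¹ʳ - z (g₁ * g₂) g₃ + z g₁ (g₂ * g₃) - z g₁ g₂ = 0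

theorem conjCoboundary_neg (σ b : G → R) (g₁ g₂ : G) :
    conjCoboundary σ (-b) g₁ g₂ = -conjCoboundary σ b g₁ g₂ := by
  simp only [conjCoboundary, Pi.neg_apply, mul_neg, neg_mul]
  abel

theorem conjCoboundary_mem {J : Ideal R} [J.IsTwoSided] (σ : G → R) {b : G → R}
    (hb : ∀ g, b g ∈ J) (g₁ g₂ : G) : conjCoboundary σ b g₁ g₂ ∈ J :=
  add_mem (sub_mem (J.mul_mem_right _ (J.mul_mem_left _ (hb g₂))) (hb _)) (hb g₁)

variable {σ : G → R}

theorem liftObstruction_eq_iff (hσ : ∀ g, IsUnit (σ g)) {g₁ g₂ : G} {m : R} :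
    liftObstruction σ g₁ g₂ = m ↔ σ (g₁ * g₂) = (1 + m) * (σ g₁ * σ g₂) := by
  rw [liftObstruction, sub_eq_iff_eq_add', eq_comm, Ring.eq_mul_inverse_iff_mul_eq _ _ _ (hσ g₁),
    Ring.eq_mul_inverse_iff_mul_eq _ _ _ (hσ g₂), eq_comm, mul_assoc]

theorem mul_eq_one_add_liftObstruction_mul (hσ : ∀ g, IsUnit (σ g)) (g₁ g₂ : G) :
    σ (g₁ * g₂) = (1 + liftObstruction σ g₁ g₂) * (σ g₁ * σ g₂) :=
  (liftObstruction_eq_iff hσ).mp rfl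

theorem liftObstruction_eq_zero_iff (hσ : ∀ g, IsUnit (σ g)) :
    (∀ g₁ g₂, liftObstruction σ g₁ g₂ = 0) ↔ ∀ g₁ g₂, σ (g₁ * g₂) = σ g₁ * σ g₂ := by
  simp only [liftObstruction_eq_iff hσ, add_zero, one_mul]

variable {J : Ideal R} [J.IsTwoSided]

theorem isConjTwoCocycle_liftObstruction (hJ : ∀ x ∈ J, ∀ y ∈ J, x * y = 0)
    (hσ : ∀ g, IsUnit (σ g)) (hc : ∀ g₁ g₂, liftObstruction σ g₁ g₂ ∈ J) :
    IsConjTwoCocycle σ (liftObstruction σ) := by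
  intro g₁ g₂ g₃
  set c := liftObstruction σ
  have h : (1 + (c (g₁ * g₂) g₃ + c g₁ g₂)) * (σ g₁ * σ g₂ * σ g₃)
      = (1 + (c g₁ (g₂ * g₃) + σ g₁ * c g₂ g₃ * (σ g₁)⁻¹ʳ)) * (σ g₁ * σ g₂ * σ g₃) := by
    rw [← one_add_mul_one_add_of_mem hJ (hc _ _) (hc _ _),
      ← one_add_mul_one_add_of_mem hJ (hc _ _) (J.mul_mem_right _ (J.mul_mem_left _ (hc _ _)))]
    calc (1 + c (g₁ * g₂) g₃) * (1 + c g₁ g₂) * (σ g₁ * σ g₂ * σ g₃)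
        = σ (g₁ * g₂ * g₃) := by
          rw [mul_eq_one_add_liftObstruction_mul hσ, mul_eq_one_add_liftObstruction_mul hσ g₁]
          simp only [c, mul_assoc]
      _ = σ (g₁ * (g₂ * g₃)) := by rw [mul_assoc]
      _ = (1 + c g₁ (g₂ * g₃)) * (1 + σ g₁ * c g₂ g₃ * (σ g₁)⁻¹ʳ) * (σ g₁ * σ g₂ * σ g₃) := by
          rw [mul_eq_one_add_liftObstruction_mul hσ, mul_eq_one_add_liftObstruction_mul hσ g₂,
            ← mul_assoc (σ g₁), mul_one_add_eq (hσ g₁)]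
          simp only [c, mul_assoc]
  have hsum := add_left_cancel (((hσ g₁).mul (hσ g₂)).mul (hσ g₃) |>.mul_right_cancel h)
  rw [← neg_eq_zero, ← sub_eq_zero.mpr hsum]
  abel

theorem liftObstruction_one_add_mul (hJ : ∀ x ∈ J, ∀ y ∈ J, x * y = 0)
    (hσ : ∀ g, IsUnit (σ g)) (hc : ∀ g₁ g₂, liftObstruction σ g₁ g₂ ∈ J) {β : G → R}
    (hβ : ∀ g, β g ∈ J) (g₁ g₂ : G) :
    liftObstruction (fun g => (1 + β g) * σ g) g₁ g₂
      = liftObstruction σ g₁ g₂ - conjCoboundary σ β g₁ g₂ := by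
  have hβσ : ∀ g, IsUnit ((1 + β g) * σ g) :=
    fun g => (isUnit_one_add_of_mem hJ (hβ g)).mul (hσ g)
  have hconj : σ g₁ * β g₂ * (σ g₁)⁻¹ʳ ∈ J := J.mul_mem_right _ (J.mul_mem_left _ (hβ g₂))
  have hsum : β (g₁ * g₂) + liftObstruction σ g₁ g₂ = liftObstruction σ g₁ g₂
      - conjCoboundary σ β g₁ g₂ + (β g₁ + σ g₁ * β g₂ * (σ g₁)⁻¹ʳ) := by
    rw [conjCoboundary]; abel
  rw [liftObstruction_eq_iff hβσ]
  calc (1 + β (g₁ * g₂)) * σ (g₁ * g₂)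
      = (1 + β (g₁ * g₂)) * (1 + liftObstruction σ g₁ g₂) * (σ g₁ * σ g₂) := by
        rw [mul_eq_one_add_liftObstruction_mul hσ, mul_assoc]
    _ = (1 + (liftObstruction σ g₁ g₂ - conjCoboundary σ β g₁ g₂))
          * (1 + (β g₁ + σ g₁ * β g₂ * (σ g₁)⁻¹ʳ)) * (σ g₁ * σ g₂) := by
        rw [one_add_mul_one_add_of_mem hJ (hβ _) (hc _ _), hsum, one_add_mul_one_add_of_mem hJ
          (sub_mem (hc _ _) (conjCoboundary_mem σ hβ _ _)) (add_mem (hβ _) hconj)]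
    _ = (1 + (liftObstruction σ g₁ g₂ - conjCoboundary σ β g₁ g₂))
          * ((1 + β g₁) * σ g₁ * ((1 + β g₂) * σ g₂)) := by
        rw [mul_assoc (1 + β g₁), ← mul_assoc (σ g₁), mul_one_add_eq (hσ g₁),
          ← one_add_mul_one_add_of_mem hJ (hβ _) hconj]
        simp only [mul_assoc]

end Cochains

section Lifts

variable {G R S : Type*} [Group G] [Ring R] [Ring S] {F : R →+* S} {J : Ideal R}
  {ρ : G →* S} {σ : G → R}

theorem isUnit_of_map_eq (hF : RingHom.ker F = J) (hJ : ∀ x ∈ J, ∀ y ∈ J, x * y = 0)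
    (hσ : ∀ g, F (σ g) = ρ g) (g : G) : IsUnit (σ g) := by
  subst hF
  refine isUnit_of_mul_sub_one_mem hJ (y := σ g⁻¹) ?_ ?_ <;>
    rw [RingHom.mem_ker, map_sub, map_mul, hσ, hσ, ← map_mul, map_one, sub_eq_zero] <;>
    simp

theorem mul_map_inverse_eq_one (hF : RingHom.ker F = J) (hJ : ∀ x ∈ J, ∀ y ∈ J, x * y = 0)
    (hσ : ∀ g, F (σ g) = ρ g) (g : G) : ρ g * F (σ g)⁻¹ʳ = 1 := by
  rw [← hσ, ← map_mul, Ring.mul_inverse_cancel _ (isUnit_of_map_eq hF hJ hσ g), map_one]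

theorem liftObstruction_mem (hF : RingHom.ker F = J) (hJ : ∀ x ∈ J, ∀ y ∈ J, x * y = 0)
    (hσ : ∀ g, F (σ g) = ρ g) (g₁ g₂ : G) : liftObstruction σ g₁ g₂ ∈ J := by
  rw [← hF, RingHom.mem_ker, liftObstruction, map_sub, map_mul, map_mul, hσ, map_mul, map_one,
    mul_assoc (ρ g₁), mul_map_inverse_eq_one hF hJ hσ, mul_one, mul_map_inverse_eq_one hF hJ hσ,
    sub_self]

theorem exists_mem_eq_one_add_mul (hF : RingHom.ker F = J) (hJ : ∀ x ∈ J, ∀ y ∈ J, x * y = 0)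
    (hσ : ∀ g, F (σ g) = ρ g) {σ' : G → R} (hσ' : ∀ g, F (σ' g) = ρ g) :
    ∃ β : G → R, (∀ g, β g ∈ J) ∧ σ' = fun g => (1 + β g) * σ g := by
  refine ⟨fun g => σ' g * (σ g)⁻¹ʳ - 1, fun g => ?_, funext fun g => ?_⟩
  · rw [← hF, RingHom.mem_ker, map_sub, map_mul, hσ', mul_map_inverse_eq_one hF hJ hσ, map_one,
      sub_self]
  · rw [add_sub_cancel, Ring.inverse_mul_cancel_right _ _ (isUnit_of_map_eq hF hJ hσ g)]

variable [J.IsTwoSided]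

theorem exists_liftObstruction_eq_add_conjCoboundary (hF : RingHom.ker F = J)
    (hJ : ∀ x ∈ J, ∀ y ∈ J, x * y = 0) (hσ : ∀ g, F (σ g) = ρ g) {σ' : G → R}
    (hσ' : ∀ g, F (σ' g) = ρ g) :
    ∃ b : G → R, (∀ g, b g ∈ J) ∧ ∀ g₁ g₂,
      liftObstruction σ' g₁ g₂ = liftObstruction σ g₁ g₂ + conjCoboundary σ b g₁ g₂ := by
  obtain ⟨β, hβ, rfl⟩ := exists_mem_eq_one_add_mul hF hJ hσ hσ'
  refine ⟨-β, fun g => neg_mem (hβ g), fun g₁ g₂ => ?_⟩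
  rw [liftObstruction_one_add_mul hJ (isUnit_of_map_eq hF hJ hσ) (liftObstruction_mem hF hJ hσ)
    hβ, conjCoboundary_neg, sub_eq_add_neg]

theorem exists_conjCoboundary_eq_liftObstruction_iff (hF : RingHom.ker F = J)
    (hJ : ∀ x ∈ J, ∀ y ∈ J, x * y = 0) (hσ : ∀ g, F (σ g) = ρ g) :
    (∃ b : G → R, (∀ g, b g ∈ J) ∧ ∀ g₁ g₂, liftObstruction σ g₁ g₂ = conjCoboundary σ b g₁ g₂)
      ↔ ∃ τ : G →* R, ∀ g, F (τ g) = ρ g := by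
  have hσu := isUnit_of_map_eq hF hJ hσ
  have hc := liftObstruction_mem hF hJ hσ
  constructor
  · rintro ⟨b, hb, hcb⟩
    set τ : G → R := fun g => (1 + b g) * σ g
    have hτ : ∀ g, F (τ g) = ρ g := fun g => by
      rw [map_mul, map_add, map_one, hσ, (RingHom.mem_ker).mp (hF ▸ hb g), add_zero, one_mul]
    have hτu := isUnit_of_map_eq hF hJ hτ
    have hτmul : ∀ g₁ g₂, τ (g₁ * g₂) = τ g₁ * τ g₂ := (liftObstruction_eq_zero_iff hτu).mp
      fun g₁ g₂ => by rw [liftObstruction_one_add_mul hJ hσu hc hb, hcb, sub_self]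
    have hτone : τ 1 = 1 := (hτu 1).mul_left_cancel (by rw [← hτmul, one_mul, mul_one])
    exact ⟨{ toFun := τ, map_one' := hτone, map_mul' := hτmul }, hτ⟩
  · rintro ⟨τ, hτ⟩
    obtain ⟨β, hβ, hτβ⟩ := exists_mem_eq_one_add_mul hF hJ hσ hτ
    refine ⟨β, hβ, fun g₁ g₂ => ?_⟩
    have hτ0 := (liftObstruction_eq_zero_iff (isUnit_of_map_eq hF hJ hτ)).mpr (map_mul τ) g₁ g₂
    rwa [hτβ, liftObstruction_one_add_mul hJ hσu hc hβ, sub_eq_zero] at hτ0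

end Lifts

section Matrices

variable {n A B : Type*} [Fintype n] [DecidableEq n]

instance Ideal.isTwoSided_matrix [Semiring A] (I : Ideal A) [I.IsTwoSided] :
    (I.matrix n).IsTwoSided :=
  ⟨fun b hm i j => by
    rw [Matrix.mul_apply]
    exact Ideal.sum_mem _ fun k _ => I.mul_mem_right _ (hm i k)⟩

theorem RingHom.ker_mapMatrix [Semiring A] [Semiring B] (f : A →+* B) :
    RingHom.ker (f.mapMatrix : Matrix n n A →+* Matrix n n B) = (RingHom.ker f).matrix n := by
  ext m
  simp [RingHom.mem_ker, ← Matrix.ext_iff]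

theorem Ideal.mul_eq_zero_of_mem_matrix [CommSemiring A] {I : Ideal A} (hI : I ^ 2 = ⊥) :
    ∀ x ∈ I.matrix n, ∀ y ∈ I.matrix n, x * y = 0 := fun x hx y hy => by
  ext i j
  refine Finset.sum_eq_zero fun k _ => ?_
  rw [← Ideal.mem_bot, ← hI, sq]
  exact Ideal.mul_mem_mul (hx i k) (hy k j)

end Matrices

theorem obstruction_eq_liftObstruction {G : Type} [Group G] {d : ℕ} {A : Type} [CommRing A]
    (ρt : G → Matrix (Fin d) (Fin d) A) (g₁ g₂ : G) :
    obstruction G d A ρt g₁ g₂ = liftObstruction ρt g₁ g₂ := by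
  simp only [obstruction, liftObstruction, Matrix.nonsing_inv_eq_ringInverse]

section

variable (G : Type) [Group G] (d : ℕ) (A B : Type) [CommRing A] [CommRing B]

theorem obstruction_theory_for_lifting_representations
    (f : A →+* B)
    (hI : (RingHom.ker f) ^ 2 = ⊥)
    (ρ : G → Matrix (Fin d) (Fin d) B)
    (hρ1 : ρ 1 = 1) (hρmul : ∀ g h, ρ (g * h) = ρ g * ρ h)
    (ρt : G → Matrix (Fin d) (Fin d) A)
    (hρt : ∀ g, (ρt g).map f = ρ g) :
    -- (a) the values of any set-theoretic lift are automatically invertible: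
    (∀ g, IsUnit (ρt g)) ∧
    -- (b) the obstruction cochain takes values in `M_d(I)` and is a 2-cocycle
    -- (for the conjugation action `m ↦ ρ̃(g) m ρ̃(g)⁻¹`):
    (∀ g₁ g₂ i j, obstruction G d A ρt g₁ g₂ i j ∈ RingHom.ker f) ∧
    (∀ g₁ g₂ g₃,
      ρt g₁ * obstruction G d A ρt g₂ g₃ * (ρt g₁)⁻¹
        - obstruction G d A ρt (g₁ * g₂) g₃
        + obstruction G d A ρt g₁ (g₂ * g₃)
        - obstruction G d A ρt g₁ g₂ = 0) ∧
    -- the conjugation action on matrices with entries in `I` does not depend on the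
    -- choice of lift (this is the `B`-module structure on `I` given by `I² = 0`):
    (∀ ρt' : G → Matrix (Fin d) (Fin d) A, (∀ g, (ρt' g).map f = ρ g) →
      ∀ (g : G) (m : Matrix (Fin d) (Fin d) A), (∀ i j, m i j ∈ RingHom.ker f) →
        ρt g * m * (ρt g)⁻¹ = ρt' g * m * (ρt' g)⁻¹) ∧
    -- (c) the cohomology class of the obstruction cocycle does not depend on the lift:
    (∀ ρt' : G → Matrix (Fin d) (Fin d) A, (∀ g, (ρt' g).map f = ρ g) →
      ∃ b : G → Matrix (Fin d) (Fin d) A, (∀ g i j, b g i j ∈ RingHom.ker f) ∧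
        ∀ g₁ g₂, obstruction G d A ρt' g₁ g₂ =
          obstruction G d A ρt g₁ g₂
            + (ρt g₁ * b g₂ * (ρt g₁)⁻¹ - b (g₁ * g₂) + b g₁)) ∧
    -- (d) the class vanishes iff `ρ` lifts to a homomorphism `G → GL_d(A)`:
    ((∃ b : G → Matrix (Fin d) (Fin d) A, (∀ g i j, b g i j ∈ RingHom.ker f) ∧
        ∀ g₁ g₂, obstruction G d A ρt g₁ g₂ =
          ρt g₁ * b g₂ * (ρt g₁)⁻¹ - b (g₁ * g₂) + b g₁) ↔
      (∃ ρA : G → Matrix (Fin d) (Fin d) A, ρA 1 = 1 ∧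
        (∀ g h, ρA (g * h) = ρA g * ρA h) ∧ (∀ g, IsUnit (ρA g)) ∧
        ∀ g, (ρA g).map f = ρ g)) ∧
    -- (e) in particular, if `H²(G, M_d(I)) = 0` then every homomorphism lifts:
    ((∀ z : G → G → Matrix (Fin d) (Fin d) A,
        (∀ g₁ g₂ i j, z g₁ g₂ i j ∈ RingHom.ker f) →
        (∀ g₁ g₂ g₃, ρt g₁ * z g₂ g₃ * (ρt g₁)⁻¹ - z (g₁ * g₂) g₃
          + z g₁ (g₂ * g₃) - z g₁ g₂ = 0) →
        ∃ b : G → Matrix (Fin d) (Fin d) A, (∀ g i j, b g i j ∈ RingHom.ker f) ∧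
          ∀ g₁ g₂, z g₁ g₂ = ρt g₁ * b g₂ * (ρt g₁)⁻¹ - b (g₁ * g₂) + b g₁) →
      ∃ ρA : G → Matrix (Fin d) (Fin d) A, ρA 1 = 1 ∧
        (∀ g h, ρA (g * h) = ρA g * ρA h) ∧ (∀ g, IsUnit (ρA g)) ∧
        ∀ g, (ρA g).map f = ρ g) := by
  let ρhom : G →* Matrix (Fin d) (Fin d) B := { toFun := ρ, map_one' := hρ1, map_mul' := hρmul }
  have hF := RingHom.ker_mapMatrix (n := Fin d) f
  have hJ := Ideal.mul_eq_zero_of_mem_matrix (n := Fin d) hI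
  have hlift : ∀ g, f.mapMatrix (ρt g) = ρhom g := hρt
  have hunit := isUnit_of_map_eq hF hJ hlift
  have hmem := liftObstruction_mem hF hJ hlift
  have hcocycle := isConjTwoCocycle_liftObstruction hJ hunit hmem
  have hlifts : (∃ τ : G →* Matrix (Fin d) (Fin d) A, ∀ g, f.mapMatrix (τ g) = ρhom g) ↔
      ∃ ρA : G → Matrix (Fin d) (Fin d) A, ρA 1 = 1 ∧ (∀ g h, ρA (g * h) = ρA g * ρA h) ∧
        (∀ g, IsUnit (ρA g)) ∧ ∀ g, (ρA g).map f = ρ g :=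
    ⟨fun ⟨τ, hτ⟩ => ⟨τ, map_one τ, map_mul τ, isUnit_of_map_eq hF hJ hτ, hτ⟩,
      fun ⟨ρA, h1, hmul, _, hA⟩ => ⟨{ toFun := ρA, map_one' := h1, map_mul' := hmul }, hA⟩⟩
  have hvanish := (exists_conjCoboundary_eq_liftObstruction_iff hF hJ hlift).trans hlifts
  simp only [obstruction_eq_liftObstruction, Matrix.nonsing_inv_eq_ringInverse]
  refine ⟨hunit, hmem, hcocycle, fun ρt' hρt' g m hm => ?_,
    fun ρt' hρt' => exists_liftObstruction_eq_add_conjCoboundary hF hJ hlift hρt', hvanish,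
    fun H => hvanish.mp (H _ hmem hcocycle)⟩
  exact mul_mul_inverse_eq_of_sub_mem hJ (hunit g) (isUnit_of_map_eq (ρ := ρhom) hF hJ hρt' g)
    (hF ▸ (RingHom.sub_mem_ker_iff _).mpr ((hρt g).trans (hρt' g).symm)) hm

end
end

section
/- Let p be a prime and E a finite field extension of ℚ_p. The E-vector space of continuous group homomorphisms from the multiplicative group ℚ_p^× to the additive group (E, +) has dimension exactly 2. -/
/-!
A continuous homomorphism `f : ℚ_p^× → E` is determined by `f p` and `f (1 + p²)`. Every
`x ∈ ℚ_p^×` is a power of `p` times a unit `u`, and `u ^ ((p - 1) p)` lies in `1 + p²ℤ_p`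
(Fermat, then one `p`-th power). There the powers of `1 + p²` are dense: `(1 + p²) ^ pⁿ - 1` has
norm exactly `p^-(n+2)`, so an element of `1 + p^(n+2)ℤ_p` can be moved into `1 + p^(n+3)ℤ_p`
by a power of `(1 + p²) ^ pⁿ`. As `E` is torsion-free, `f` vanishes once `f p = f (1 + p²) = 0`.

Both values are attained independently: the valuation kills `1 + p²`, and
`x ↦ log (unit part of x) ^ (p - 1)`, with `log u = lim (u ^ pⁿ - 1) / pⁿ` on `1 + pℤ_p`, kills `p`
but not `1 + p²`, because `‖log u‖ = ‖u - 1‖` when `‖u - 1‖ < p⁻¹`.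
-/

/-- The `E`-vector space of continuous homomorphisms `ℚ_p^× → (E, +)`. -/
def contAddHomSpace (p : ℕ) [Fact p.Prime] (E : Type)
    [NontriviallyNormedField E] [NormedAlgebra ℚ_[p] E] :
    Submodule E (ℚ_[p]ˣ → E) where
  carrier := {f | Continuous f ∧ ∀ x y, f (x * y) = f x + f y}
  zero_mem' := ⟨continuous_const, by simp⟩
  add_mem' {f g} hf hg := ⟨hf.1.add hg.1, fun x y => by
    simp only [Pi.add_apply, hf.2 x y, hg.2 x y]; ring⟩
  smul_mem' r f hf := ⟨hf.1.const_smul r, fun x y => by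
    simp only [Pi.smul_apply, hf.2 x y, smul_eq_mul]; ring⟩

open Filter Topology

section Ultrametric

variable {R : Type*} [NormedRing R] [IsUltrametricDist R] {u v z : R}

lemma norm_mul_sub_one_le_max (hu : ‖u‖ ≤ 1) : ‖u * v - 1‖ ≤ max ‖u - 1‖ ‖v - 1‖ := by
  rw [max_comm, show u * v - 1 = u * (v - 1) + (u - 1) by noncomm_ring]
  refine (IsUltrametricDist.norm_add_le_max _ _).trans (max_le_max_right _ ?_)
  exact (norm_mul_le _ _).trans (mul_le_of_le_one_left (norm_nonneg _) hu)

variable [NormOneClass R]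

lemma norm_eq_one_of_norm_sub_one_lt_one (hz : ‖z - 1‖ < 1) : ‖z‖ = 1 := by
  rw [← sub_add_cancel z 1,
    IsUltrametricDist.norm_add_eq_max_of_norm_ne_norm (by simpa using hz.ne), norm_one, max_eq_right (by simpa using hz.le)]

lemma norm_geom_sum_le_one (hz : ‖z‖ ≤ 1) (n : ℕ) : ‖∑ i ∈ Finset.range n, z ^ i‖ ≤ 1 :=
  IsUltrametricDist.norm_sum_le_of_forall_le_of_nonneg zero_le_one fun i _ =>
    (norm_pow_le z i).trans (pow_le_one₀ (norm_nonneg z) hz)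

lemma norm_pow_sub_one_le (hz : ‖z‖ ≤ 1) (n : ℕ) : ‖z ^ n - 1‖ ≤ ‖z - 1‖ := by
  rw [← mul_geom_sum]
  exact (norm_mul_le _ _).trans (mul_le_of_le_one_right (norm_nonneg _) (norm_geom_sum_le_one hz n))

lemma norm_pow_sub_one_sub_mul_le (hz : ‖z‖ ≤ 1) (n : ℕ) :
    ‖z ^ n - 1 - n * (z - 1)‖ ≤ ‖z - 1‖ ^ 2 := by
  have hfactor : z ^ n - 1 - n * (z - 1) = (z - 1) * ∑ i ∈ Finset.range n, (z ^ i - 1) := by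
    rw [Finset.sum_sub_distrib, mul_sub (z - 1), mul_geom_sum, Finset.sum_const,
      Finset.card_range, nsmul_eq_mul, mul_one, Nat.cast_comm]
  rw [hfactor, sq]
  refine (norm_mul_le _ _).trans (mul_le_mul_of_nonneg_left ?_ (norm_nonneg _))
  exact IsUltrametricDist.norm_sum_le_of_forall_le_of_nonneg (norm_nonneg _)
    fun i _ => norm_pow_sub_one_le hz i

end Ultrametric

lemma map_pow_of_map_mul {G A : Type*} [Group G] [AddGroup A] {f : G → A}
    (hf : ∀ x y, f (x * y) = f x + f y) (x : G) (n : ℕ) : f (x ^ n) = n • f x :=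
  map_pow (MonoidHom.mk' (Multiplicative.ofAdd ∘ f) hf) x n

lemma map_zpow_of_map_mul {G A : Type*} [Group G] [AddGroup A] {f : G → A}
    (hf : ∀ x y, f (x * y) = f x + f y) (x : G) (n : ℤ) : f (x ^ n) = n • f x :=
  map_zpow (MonoidHom.mk' (Multiplicative.ofAdd ∘ f) hf) x n

namespace Padic

variable {p : ℕ} [Fact p.Prime]

lemma prime_cast_pos : (0 : ℝ) < p :=
  mod_cast (Fact.out : p.Prime).pos

lemma inv_prime_lt_one : (p : ℝ)⁻¹ < 1 :=
  inv_lt_one_of_one_lt₀ (mod_cast (Fact.out : p.Prime).one_lt)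

lemma inv_prime_pow_le_one (n : ℕ) : (p : ℝ)⁻¹ ^ n ≤ 1 :=
  pow_le_one₀ (inv_pos.2 prime_cast_pos).le inv_prime_lt_one.le

lemma norm_eq_one_of_norm_sub_one_le {z : ℚ_[p]} (hz : ‖z - 1‖ ≤ (p : ℝ)⁻¹) : ‖z‖ = 1 :=
  norm_eq_one_of_norm_sub_one_lt_one (hz.trans_lt inv_prime_lt_one)

lemma norm_p_pow_eq_inv_pow (n : ℕ) : ‖(p : ℚ_[p]) ^ n‖ = (p : ℝ)⁻¹ ^ n := by
  rw [norm_pow, norm_p]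

lemma norm_le_inv_prime_of_norm_lt_one {x : ℚ_[p]} (hx : ‖x‖ < 1) : ‖x‖ ≤ (p : ℝ)⁻¹ := by
  simpa using (norm_le_pow_iff_norm_lt_pow_add_one x (-1)).2 (by simpa using hx)

lemma norm_pow_prime_sub_one_le {z : ℚ_[p]} (hz : ‖z - 1‖ ≤ (p : ℝ)⁻¹) :
    ‖z ^ p - 1‖ ≤ (p : ℝ)⁻¹ * ‖z - 1‖ := by
  rw [← sub_add_cancel (z ^ p - 1) (p * (z - 1))]
  refine (IsUltrametricDist.norm_add_le_max _ _).trans (max_le ?_ ?_)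
  · calc _ ≤ ‖z - 1‖ ^ 2 := norm_pow_sub_one_sub_mul_le (norm_eq_one_of_norm_sub_one_le hz).le p
      _ ≤ _ := by rw [sq]; exact mul_le_mul_of_nonneg_right hz (norm_nonneg _)
  · rw [norm_mul, norm_p]

lemma norm_pow_prime_sub_one_eq {z : ℚ_[p]} (hz : ‖z - 1‖ < (p : ℝ)⁻¹) :
    ‖z ^ p - 1‖ = (p : ℝ)⁻¹ * ‖z - 1‖ := by
  rcases eq_or_ne z 1 with rfl | hne
  · simp
  have hz1 : ‖z‖ ≤ 1 := (norm_eq_one_of_norm_sub_one_le hz.le).le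
  have hsmall : ‖z ^ p - 1 - p * (z - 1)‖ < ‖(p : ℚ_[p]) * (z - 1)‖ := by
    rw [norm_mul, norm_p]
    calc _ ≤ ‖z - 1‖ ^ 2 := norm_pow_sub_one_sub_mul_le hz1 p
      _ < _ := by rw [sq]; exact mul_lt_mul_of_pos_right hz (norm_pos_iff.2 (sub_ne_zero.2 hne))
  rw [← sub_add_cancel (z ^ p - 1) (p * (z - 1)),
    IsUltrametricDist.norm_add_eq_max_of_norm_ne_norm hsmall.ne, max_eq_right hsmall.le,
    norm_mul, norm_p]

lemma norm_pow_prime_pow_sub_one_le {z : ℚ_[p]} (hz : ‖z - 1‖ ≤ (p : ℝ)⁻¹) (n : ℕ) :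
    ‖z ^ p ^ n - 1‖ ≤ (p : ℝ)⁻¹ ^ n * ‖z - 1‖ := by
  induction n with
  | zero => simp
  | succ n ih =>
    have hsmall : ‖z ^ p ^ n - 1‖ ≤ (p : ℝ)⁻¹ :=
      ih.trans ((mul_le_of_le_one_left (norm_nonneg _) (inv_prime_pow_le_one n)).trans hz)
    rw [pow_succ, pow_mul, pow_succ', mul_assoc]
    exact (norm_pow_prime_sub_one_le hsmall).trans (mul_le_mul_of_nonneg_left ih (by positivity))

lemma norm_pow_prime_pow_sub_one_eq {z : ℚ_[p]} (hz : ‖z - 1‖ < (p : ℝ)⁻¹) (n : ℕ) :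
    ‖z ^ p ^ n - 1‖ = (p : ℝ)⁻¹ ^ n * ‖z - 1‖ := by
  induction n with
  | zero => simp
  | succ n ih =>
    have hsmall : ‖z ^ p ^ n - 1‖ < (p : ℝ)⁻¹ := by
      rw [ih]
      exact (mul_le_of_le_one_left (norm_nonneg _) (inv_prime_pow_le_one n)).trans_lt hz
    rw [pow_succ, pow_mul, norm_pow_prime_sub_one_eq hsmall, ih, pow_succ', mul_assoc]

lemma exists_nat_norm_sub_pow_le {z w : ℚ_[p]} (hw : ‖w - 1‖ ≤ (p : ℝ)⁻¹)
    (hz : ‖z - 1‖ ≤ ‖w - 1‖) : ∃ a : ℕ, ‖z - w ^ a‖ ≤ (p : ℝ)⁻¹ * ‖w - 1‖ := by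
  rcases eq_or_ne w 1 with rfl | hw1
  · exact ⟨0, by simpa using hz⟩
  have hw0 : w - 1 ≠ 0 := sub_ne_zero.2 hw1
  set q := (z - 1) / (w - 1) with hq_def
  have hq : ‖q‖ ≤ 1 := by rw [norm_div]; exact div_le_one_of_le₀ hz (norm_nonneg _)
  let ξ : ℤ_[p] := ⟨q, hq⟩
  obtain ⟨a, -, ha⟩ := PadicInt.exists_mem_range ξ
  rw [IsLocalRing.mem_maximalIdeal, PadicInt.mem_nonunits, PadicInt.norm_def, PadicInt.coe_sub,
    PadicInt.coe_natCast] at ha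
  have hqa : ‖q - a‖ ≤ (p : ℝ)⁻¹ := norm_le_inv_prime_of_norm_lt_one ha
  have hsplit : z - w ^ a = (w - 1) * (q - a) + -(w ^ a - 1 - a * (w - 1)) := by
    rw [hq_def]; field_simp; ring
  refine ⟨a, ?_⟩
  rw [hsplit]
  refine (IsUltrametricDist.norm_add_le_max _ _).trans (max_le ?_ ?_)
  · rw [norm_mul, mul_comm]
    exact mul_le_mul_of_nonneg_right hqa (norm_nonneg _)
  · rw [norm_neg]
    refine (norm_pow_sub_one_sub_mul_le (norm_eq_one_of_norm_sub_one_le hw).le a).trans ?_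
    rw [sq]
    exact mul_le_mul_of_nonneg_right hw (norm_nonneg _)

lemma mem_closure_range_pow {g z : ℚ_[p]} (hg : ‖g - 1‖ < (p : ℝ)⁻¹)
    (hz : ‖z - 1‖ ≤ ‖g - 1‖) : z ∈ closure (Set.range (g ^ · : ℕ → ℚ_[p])) := by
  have hg1 : ‖g‖ = 1 := norm_eq_one_of_norm_sub_one_lt_one (hg.trans inv_prime_lt_one)
  have happrox (n : ℕ) : ∃ k : ℕ, ‖z - g ^ k‖ ≤ (p : ℝ)⁻¹ ^ n * ‖g - 1‖ := by
    induction n with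
    | zero => exact ⟨0, by simpa using hz⟩
    | succ n ih =>
      obtain ⟨k, hk⟩ := ih
      have hgk : ‖g ^ k‖ = 1 := by rw [norm_pow, hg1, one_pow]
      have hgk0 : g ^ k ≠ 0 := norm_ne_zero_iff.1 (by rw [hgk]; exact one_ne_zero)
      have hgpn := norm_pow_prime_pow_sub_one_eq hg n
      have hquot : ‖z / g ^ k - 1‖ = ‖z - g ^ k‖ := by
        rw [div_sub_one hgk0, norm_div, hgk, div_one]
      obtain ⟨a, ha⟩ := exists_nat_norm_sub_pow_le (z := z / g ^ k) (w := g ^ p ^ n)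
        (by rw [hgpn]; exact (mul_le_of_le_one_left (norm_nonneg _)
          (inv_prime_pow_le_one n)).trans hg.le)
        (by rw [hgpn, hquot]; exact hk)
      refine ⟨k + p ^ n * a, ?_⟩
      calc ‖z - g ^ (k + p ^ n * a)‖ = ‖g ^ k * (z / g ^ k - (g ^ p ^ n) ^ a)‖ := by
            rw [mul_sub, mul_div_cancel₀ _ hgk0, pow_add, pow_mul]
        _ ≤ (p : ℝ)⁻¹ * ((p : ℝ)⁻¹ ^ n * ‖g - 1‖) := by
            rw [norm_mul, hgk, one_mul, ← hgpn]; exact ha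
        _ = (p : ℝ)⁻¹ ^ (n + 1) * ‖g - 1‖ := by ring
  have hlim : Tendsto (fun n : ℕ => (p : ℝ)⁻¹ ^ n * ‖g - 1‖) atTop (𝓝 0) := by
    simpa using (tendsto_pow_atTop_nhds_zero_of_lt_one (by positivity) inv_prime_lt_one).mul_const
      ‖g - 1‖
  refine Metric.mem_closure_iff.2 fun ε hε => ?_
  obtain ⟨n, hn⟩ := (hlim.eventually (gt_mem_nhds hε)).exists
  obtain ⟨k, hk⟩ := happrox n
  exact ⟨g ^ k, ⟨k, rfl⟩, by rw [dist_eq_norm]; exact hk.trans_lt hn⟩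

lemma norm_pow_pred_sub_one_le_of_norm_eq_one {x : ℚ_[p]} (hx : ‖x‖ = 1) :
    ‖x ^ (p - 1) - 1‖ ≤ (p : ℝ)⁻¹ := by
  set z : ℤ_[p] := ⟨x, hx.le⟩
  have hz : PadicInt.toZMod z ≠ 0 := ((PadicInt.isUnit_iff.2 hx).map PadicInt.toZMod).ne_zero
  have hker : z ^ (p - 1) - 1 ∈ IsLocalRing.maximalIdeal ℤ_[p] := by
    rw [← PadicInt.ker_toZMod, RingHom.mem_ker, map_sub, map_pow, ZMod.pow_card_sub_one_eq_one hz,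
      map_one, sub_self]
  rw [IsLocalRing.mem_maximalIdeal, PadicInt.mem_nonunits, PadicInt.norm_def] at hker
  exact norm_le_inv_prime_of_norm_lt_one (by simpa using hker)

lemma valuation_eq_of_norm_eq {x y : ℚ_[p]} (hx : x ≠ 0) (hy : y ≠ 0) (h : ‖x‖ = ‖y‖) :
    x.valuation = y.valuation := by
  rw [norm_eq_zpow_neg_valuation hx, norm_eq_zpow_neg_valuation hy] at h
  exact neg_injective (zpow_right_injective₀ prime_cast_pos
    (mod_cast (Fact.out : p.Prime).ne_one) h)

lemma continuous_valuation_units : Continuous fun x : ℚ_[p]ˣ => (x : ℚ_[p]).valuation := by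
  refine IsLocallyConstant.continuous ((IsLocallyConstant.iff_eventually_eq _).2 fun x₀ => ?_)
  have hsphere : Metric.sphere 0 ‖(x₀ : ℚ_[p])‖ ∈ 𝓝 (x₀ : ℚ_[p]) :=
    (IsUltrametricDist.isOpen_sphere 0 (norm_ne_zero_iff.2 x₀.ne_zero)).mem_nhds (by simp)
  filter_upwards [Units.continuous_val.continuousAt.preimage_mem_nhds hsphere] with x hx
  exact valuation_eq_of_norm_eq x.ne_zero x₀.ne_zero (mem_sphere_zero_iff_norm.1 hx)

lemma norm_p_sq_lt_inv_prime : ‖(p : ℚ_[p]) ^ 2‖ < (p : ℝ)⁻¹ := by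
  rw [norm_p_pow_eq_inv_pow, sq]
  exact mul_lt_of_lt_one_left (inv_pos.2 prime_cast_pos) inv_prime_lt_one

variable (p) in
noncomputable def pUnit : ℚ_[p]ˣ :=
  Units.mk0 p (Nat.cast_ne_zero.2 (Fact.out : p.Prime).ne_zero)

lemma norm_one_add_p_sq : ‖1 + (p : ℚ_[p]) ^ 2‖ = 1 :=
  norm_eq_one_of_norm_sub_one_lt_one <| by
    rw [add_sub_cancel_left]; exact norm_p_sq_lt_inv_prime.trans inv_prime_lt_one

variable (p) in
noncomputable def oneAddPSqUnit : ℚ_[p]ˣ :=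
  Units.mk0 (1 + p ^ 2) (norm_ne_zero_iff.1 (by rw [norm_one_add_p_sq]; exact one_ne_zero))

lemma valuation_pUnit : (pUnit p : ℚ_[p]).valuation = 1 :=
  valuation_p

lemma valuation_of_norm_eq_one {x : ℚ_[p]} (hx : ‖x‖ = 1) : x.valuation = 0 := by
  rw [valuation_eq_of_norm_eq (norm_ne_zero_iff.1 (by rw [hx]; exact one_ne_zero)) one_ne_zero
    (by rw [hx, norm_one]), valuation_one]

lemma valuation_oneAddPSqUnit : (oneAddPSqUnit p : ℚ_[p]).valuation = 0 :=
  valuation_of_norm_eq_one norm_one_add_p_sq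

lemma oneAddPSqUnit_sub_one : (oneAddPSqUnit p : ℚ_[p]) - 1 = (p : ℚ_[p]) ^ 2 := by
  simp [oneAddPSqUnit]

noncomputable def unitPart (x : ℚ_[p]ˣ) : ℚ_[p]ˣ := x * pUnit p ^ (-(x : ℚ_[p]).valuation)

lemma unitPart_mul_pUnit_zpow (x : ℚ_[p]ˣ) : unitPart x * pUnit p ^ (x : ℚ_[p]).valuation = x := by
  rw [unitPart, mul_assoc, ← zpow_add, neg_add_cancel, zpow_zero, mul_one]

lemma norm_unitPart (x : ℚ_[p]ˣ) : ‖(unitPart x : ℚ_[p])‖ = 1 := by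
  rw [unitPart, Units.val_mul, Units.val_zpow_eq_zpow_val, norm_mul, norm_zpow, pUnit,
    Units.val_mk0, norm_p, norm_eq_zpow_neg_valuation x.ne_zero, inv_zpow',
    ← zpow_add₀ prime_cast_pos.ne', neg_neg, neg_add_cancel, zpow_zero]

lemma unitPart_mul (x y : ℚ_[p]ˣ) : unitPart (x * y) = unitPart x * unitPart y := by
  rw [unitPart, unitPart, unitPart, Units.val_mul, valuation_mul x.ne_zero y.ne_zero, neg_add,
    zpow_add, mul_mul_mul_comm]

lemma unitPart_of_norm_eq_one {x : ℚ_[p]ˣ} (hx : ‖(x : ℚ_[p])‖ = 1) : unitPart x = x := by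
  rw [unitPart, valuation_of_norm_eq_one hx, neg_zero, zpow_zero, mul_one]

lemma unitPart_pUnit : unitPart (pUnit p) = 1 := by
  rw [unitPart, valuation_pUnit, zpow_neg, zpow_one, mul_inv_cancel]

lemma continuous_unitPart : Continuous (unitPart (p := p)) :=
  continuous_id.mul ((continuous_of_discreteTopology (f := fun n : ℤ => pUnit p ^ (-n))).comp
    continuous_valuation_units)

section Uniqueness

variable {A : Type*} [AddCommGroup A] [TopologicalSpace A] [T1Space A] {f : ℚ_[p]ˣ → A}

lemma apply_eq_zero_of_norm_sub_one_le (hc : Continuous f) (hf : ∀ x y, f (x * y) = f x + f y)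
    (hg : f (oneAddPSqUnit p) = 0) {u : ℚ_[p]ˣ} (hu : ‖(u : ℚ_[p]) - 1‖ ≤ (p : ℝ)⁻¹ ^ 2) :
    f u = 0 := by
  have hpow (n : ℕ) : f (oneAddPSqUnit p ^ n) = 0 := by
    rw [map_pow_of_map_mul hf, hg, smul_zero]
  have hclosure : u ∈ closure (Set.range (oneAddPSqUnit p ^ · : ℕ → ℚ_[p]ˣ)) := by
    rw [Units.isOpenEmbedding_val.isInducing.closure_eq_preimage_closure_image, ← Set.range_comp]
    refine mem_closure_range_pow (by rw [oneAddPSqUnit_sub_one]; exact norm_p_sq_lt_inv_prime) ?_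
    rwa [oneAddPSqUnit_sub_one, norm_p_pow_eq_inv_pow]
  exact closure_minimal (Set.range_subset_iff.2 hpow) (isClosed_singleton.preimage hc) hclosure

lemma apply_eq_zero_of_norm_eq_one [IsAddTorsionFree A] (hc : Continuous f)
    (hf : ∀ x y, f (x * y) = f x + f y) (hg : f (oneAddPSqUnit p) = 0) {u : ℚ_[p]ˣ}
    (hu : ‖(u : ℚ_[p])‖ = 1) : f u = 0 := by
  have hfermat := norm_pow_pred_sub_one_le_of_norm_eq_one hu
  have hpow : ‖((u ^ ((p - 1) * p) : ℚ_[p]ˣ) : ℚ_[p]) - 1‖ ≤ (p : ℝ)⁻¹ ^ 2 := by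
    rw [Units.val_pow_eq_pow_val, pow_mul, sq]
    exact (norm_pow_prime_sub_one_le hfermat).trans
      (mul_le_mul_of_nonneg_left hfermat (by positivity))
  have hN : (p - 1) * p ≠ 0 := by
    have := (Fact.out : p.Prime).two_le
    exact Nat.mul_ne_zero (by omega) (by omega)
  have := apply_eq_zero_of_norm_sub_one_le hc hf hg hpow
  rw [map_pow_of_map_mul hf, ← smul_zero ((p - 1) * p)] at this
  exact nsmul_right_injective hN this

theorem eq_zero_of_apply_pUnit_of_apply_oneAddPSqUnit [IsAddTorsionFree A] (hc : Continuous f)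
    (hf : ∀ x y, f (x * y) = f x + f y) (hp : f (pUnit p) = 0) (hg : f (oneAddPSqUnit p) = 0) :
    f = 0 := by
  funext x
  rw [← unitPart_mul_pUnit_zpow x, hf, map_zpow_of_map_mul hf, hp, smul_zero, add_zero]
  exact apply_eq_zero_of_norm_eq_one hc hf hg (norm_unitPart x)

end Uniqueness

noncomputable def logSeq (u : ℚ_[p]) (n : ℕ) : ℚ_[p] := (u ^ p ^ n - 1) / (p : ℚ_[p]) ^ n

/-- The `p`-adic logarithm on `1 + pℤ_p`, as `lim (u ^ p ^ n - 1) / p ^ n`; junk elsewhere. -/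
noncomputable def log (u : ℚ_[p]) : ℚ_[p] := limUnder atTop (logSeq u)

section Log

variable {u v : ℚ_[p]}

lemma norm_logSeq_le (hu : ‖u - 1‖ ≤ (p : ℝ)⁻¹) (n : ℕ) : ‖logSeq u n‖ ≤ ‖u - 1‖ := by
  rw [logSeq, norm_div, norm_p_pow_eq_inv_pow, div_le_iff₀ (pow_pos (inv_pos.2 prime_cast_pos) n),
    mul_comm]
  exact norm_pow_prime_pow_sub_one_le hu n

lemma logSeq_succ_sub (u : ℚ_[p]) (n : ℕ) : logSeq u (n + 1) - logSeq u n =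
    ((u ^ p ^ n) ^ p - 1 - p * (u ^ p ^ n - 1)) / (p : ℚ_[p]) ^ (n + 1) := by
  have hp : (p : ℚ_[p]) ≠ 0 := Nat.cast_ne_zero.2 (Fact.out : p.Prime).ne_zero
  rw [logSeq, logSeq, ← pow_mul, ← pow_succ]
  field_simp
  ring

lemma norm_logSeq_succ_sub_le (hu : ‖u - 1‖ ≤ (p : ℝ)⁻¹) (n : ℕ) :
    ‖logSeq u (n + 1) - logSeq u n‖ ≤ p * ‖u - 1‖ ^ 2 * (p : ℝ)⁻¹ ^ n := by
  have hpow := norm_pow_prime_pow_sub_one_le hu n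
  have hnorm : ‖u ^ p ^ n‖ ≤ 1 := by rw [norm_pow, norm_eq_one_of_norm_sub_one_le hu, one_pow]
  rw [logSeq_succ_sub, norm_div, norm_p_pow_eq_inv_pow,
    div_le_iff₀ (pow_pos (inv_pos.2 prime_cast_pos) _)]
  calc _ ≤ ‖u ^ p ^ n - 1‖ ^ 2 := norm_pow_sub_one_sub_mul_le hnorm p
    _ ≤ ((p : ℝ)⁻¹ ^ n * ‖u - 1‖) ^ 2 := pow_le_pow_left₀ (norm_nonneg _) hpow 2
    _ = _ := by
      have := (prime_cast_pos (p := p)).ne'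
      simp only [inv_pow]
      field_simp
      ring

lemma tendsto_logSeq (hu : ‖u - 1‖ ≤ (p : ℝ)⁻¹) : Tendsto (logSeq u) atTop (𝓝 (log u)) :=
  (cauchySeq_of_le_geometric _ _ inv_prime_lt_one fun n => by
    rw [dist_comm, dist_eq_norm]; exact norm_logSeq_succ_sub_le hu n).tendsto_limUnder

lemma norm_log_le (hu : ‖u - 1‖ ≤ (p : ℝ)⁻¹) : ‖log u‖ ≤ ‖u - 1‖ :=
  le_of_tendsto (tendsto_logSeq hu).norm (Eventually.of_forall (norm_logSeq_le hu))

lemma log_one : log (1 : ℚ_[p]) = 0 :=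
  norm_le_zero_iff.1 (by simpa using norm_log_le (u := 1) (by simp))

lemma norm_log_sub_sub_one_le (hu : ‖u - 1‖ ≤ (p : ℝ)⁻¹) :
    ‖log u - (u - 1)‖ ≤ p * ‖u - 1‖ ^ 2 := by
  have hseq (n : ℕ) : ‖logSeq u n - (u - 1)‖ ≤ p * ‖u - 1‖ ^ 2 := by
    induction n with
    | zero =>
      simp only [logSeq, pow_zero, pow_one, div_one, sub_self, norm_zero]
      positivity
    | succ n ih =>
      rw [← sub_add_sub_cancel _ (logSeq u n)]
      refine (IsUltrametricDist.norm_add_le_max _ _).trans (max_le ?_ ih)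
      exact (norm_logSeq_succ_sub_le hu n).trans
        (mul_le_of_le_one_right (by positivity) (inv_prime_pow_le_one n))
  exact le_of_tendsto ((tendsto_logSeq hu).sub_const _).norm (Eventually.of_forall hseq)

lemma norm_log (hu : ‖u - 1‖ < (p : ℝ)⁻¹) : ‖log u‖ = ‖u - 1‖ := by
  rcases eq_or_ne u 1 with rfl | hne
  · simp [log_one]
  have hsmall : ‖log u - (u - 1)‖ < ‖u - 1‖ := by
    refine (norm_log_sub_sub_one_le hu.le).trans_lt ?_
    rw [sq, ← mul_assoc]
    refine mul_lt_of_lt_one_left (norm_pos_iff.2 (sub_ne_zero.2 hne)) ?_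
    rwa [← lt_inv_mul_iff₀ prime_cast_pos, mul_one]
  rw [← sub_add_cancel (log u) (u - 1),
    IsUltrametricDist.norm_add_eq_max_of_norm_ne_norm hsmall.ne, max_eq_right hsmall.le]

lemma logSeq_mul (u v : ℚ_[p]) (n : ℕ) : logSeq (u * v) n =
    logSeq u n + logSeq v n + (p : ℚ_[p]) ^ n * (logSeq u n * logSeq v n) := by
  have hp : (p : ℚ_[p]) ≠ 0 := Nat.cast_ne_zero.2 (Fact.out : p.Prime).ne_zero
  simp only [logSeq]
  field_simp
  ring

lemma log_mul (hu : ‖u - 1‖ ≤ (p : ℝ)⁻¹) (hv : ‖v - 1‖ ≤ (p : ℝ)⁻¹) :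
    log (u * v) = log u + log v := by
  have huv : ‖u * v - 1‖ ≤ (p : ℝ)⁻¹ :=
    (norm_mul_sub_one_le_max (norm_eq_one_of_norm_sub_one_le hu).le).trans (max_le hu hv)
  have hpow : Tendsto (fun n => (p : ℚ_[p]) ^ n) atTop (𝓝 0) :=
    tendsto_pow_atTop_nhds_zero_of_norm_lt_one (by rw [norm_p]; exact inv_prime_lt_one)
  have hsum := ((tendsto_logSeq hu).add (tendsto_logSeq hv)).add
    (hpow.mul ((tendsto_logSeq hu).mul (tendsto_logSeq hv)))
  rw [zero_mul, add_zero] at hsum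
  exact tendsto_nhds_unique (tendsto_logSeq huv) (hsum.congr fun n => (logSeq_mul u v n).symm)

lemma log_pow (hu : ‖u - 1‖ ≤ (p : ℝ)⁻¹) (n : ℕ) : log (u ^ n) = n * log u := by
  induction n with
  | zero => rw [pow_zero, log_one, Nat.cast_zero, zero_mul]
  | succ n ih =>
    rw [pow_succ, log_mul ((norm_pow_sub_one_le (norm_eq_one_of_norm_sub_one_le hu).le n).trans hu)
      hu, ih]
    push_cast
    ring

lemma lipschitzOnWith_log : LipschitzOnWith 1 log (Metric.closedBall (1 : ℚ_[p]) (p : ℝ)⁻¹) := by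
  refine LipschitzOnWith.of_dist_le_mul fun u hu v hv => ?_
  rw [Metric.mem_closedBall, dist_eq_norm] at hu hv
  have hv0 : v ≠ 0 := norm_ne_zero_iff.1 (by
    rw [norm_eq_one_of_norm_sub_one_le hv]; exact one_ne_zero)
  have hquot : ‖u / v - 1‖ = ‖u - v‖ := by
    rw [div_sub_one hv0, norm_div, norm_eq_one_of_norm_sub_one_le hv, div_one]
  have huv : ‖u - v‖ ≤ (p : ℝ)⁻¹ := by
    rw [← sub_sub_sub_cancel_right u v 1, sub_eq_add_neg]
    exact (IsUltrametricDist.norm_add_le_max _ _).trans (max_le hu (by rwa [norm_neg]))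
  rw [NNReal.coe_one, one_mul, dist_eq_norm, dist_eq_norm, ← div_mul_cancel₀ u hv0,
    log_mul (hquot ▸ huv) hv, add_sub_cancel_right, div_mul_cancel₀ u hv0, ← hquot]
  exact norm_log_le (hquot ▸ huv)

end Log

/-- Raising the unit part to the power `p - 1` puts it in `1 + pℤ_p`, where `log` converges. -/
noncomputable def logUnitPart (x : ℚ_[p]ˣ) : ℚ_[p] := log ((unitPart x : ℚ_[p]) ^ (p - 1))

lemma logUnitPart_mul (x y : ℚ_[p]ˣ) :
    logUnitPart (x * y) = logUnitPart x + logUnitPart y := by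
  rw [logUnitPart, unitPart_mul, Units.val_mul, mul_pow,
    log_mul (norm_pow_pred_sub_one_le_of_norm_eq_one (norm_unitPart x))
      (norm_pow_pred_sub_one_le_of_norm_eq_one (norm_unitPart y)),
    logUnitPart, logUnitPart]

lemma continuous_logUnitPart : Continuous (logUnitPart (p := p)) :=
  lipschitzOnWith_log.continuousOn.comp_continuous
    ((Units.continuous_val.comp continuous_unitPart).pow _) fun x => by
      rw [Metric.mem_closedBall, dist_eq_norm]
      exact norm_pow_pred_sub_one_le_of_norm_eq_one (norm_unitPart x)

lemma logUnitPart_pUnit : logUnitPart (pUnit p) = 0 := by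
  rw [logUnitPart, unitPart_pUnit, Units.val_one, one_pow, log_one]

lemma logUnitPart_oneAddPSqUnit_ne_zero : logUnitPart (oneAddPSqUnit p) ≠ 0 := by
  have hg : ‖(oneAddPSqUnit p : ℚ_[p]) - 1‖ < (p : ℝ)⁻¹ := by
    rw [oneAddPSqUnit_sub_one]; exact norm_p_sq_lt_inv_prime
  rw [logUnitPart, unitPart_of_norm_eq_one (norm_eq_one_of_norm_sub_one_le hg.le), log_pow hg.le]
  refine mul_ne_zero (Nat.cast_ne_zero.2 (by have := (Fact.out : p.Prime).two_le; omega)) ?_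
  rw [← norm_ne_zero_iff, norm_log hg, oneAddPSqUnit_sub_one, norm_p_pow_eq_inv_pow]
  exact pow_ne_zero _ (inv_ne_zero prime_cast_pos.ne')

section Characters

variable (E : Type) [NontriviallyNormedField E] [NormedAlgebra ℚ_[p] E]

lemma valuation_mem_contAddHomSpace :
    (fun x : ℚ_[p]ˣ => ((x : ℚ_[p]).valuation : E)) ∈ contAddHomSpace p E :=
  ⟨(continuous_of_discreteTopology (f := ((↑) : ℤ → E))).comp continuous_valuation_units,
    fun x y => by dsimp only; rw [Units.val_mul, valuation_mul x.ne_zero y.ne_zero, Int.cast_add]⟩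

lemma algebraMap_logUnitPart_mem_contAddHomSpace :
    (fun x => algebraMap ℚ_[p] E (logUnitPart x)) ∈ contAddHomSpace p E :=
  ⟨(continuous_algebraMap ℚ_[p] E).comp continuous_logUnitPart,
    fun x y => by dsimp only; rw [logUnitPart_mul, map_add]⟩

end Characters

end Padic

open Padic

theorem finrank_contAddHomSpace_eq_two_general (p : ℕ) [Fact p.Prime] (E : Type)
    [NontriviallyNormedField E] [NormedAlgebra ℚ_[p] E] :
    Module.finrank E (contAddHomSpace p E) = 2 := by
  have : CharZero E := charZero_of_injective_algebraMap (algebraMap ℚ_[p] E).injective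
  let Φ : contAddHomSpace p E →ₗ[E] E × E :=
    (LinearMap.proj (pUnit p)).prod (LinearMap.proj (oneAddPSqUnit p)) ∘ₗ
      (contAddHomSpace p E).subtype
  have hinj : Function.Injective Φ := (injective_iff_map_eq_zero Φ).2 fun f hf =>
    Subtype.ext (eq_zero_of_apply_pUnit_of_apply_oneAddPSqUnit f.2.1 f.2.2
      (congrArg Prod.fst hf) (congrArg Prod.snd hf))
  have hval := valuation_mem_contAddHomSpace (p := p) E
  have hlog := algebraMap_logUnitPart_mem_contAddHomSpace (p := p) E
  have hc : algebraMap ℚ_[p] E (logUnitPart (oneAddPSqUnit p)) ≠ 0 :=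
    (map_ne_zero _).2 logUnitPart_oneAddPSqUnit_ne_zero
  have hΦval : Φ ⟨_, hval⟩ = (1, 0) := by simp [Φ, valuation_pUnit, valuation_oneAddPSqUnit]
  have hΦlog : Φ ⟨_, hlog⟩ = (0, algebraMap ℚ_[p] E (logUnitPart (oneAddPSqUnit p))) := by
    simp [Φ, logUnitPart_pUnit]
  have hsurj : Function.Surjective Φ := fun ⟨a, b⟩ =>
    ⟨a • ⟨_, hval⟩ + (b / algebraMap ℚ_[p] E (logUnitPart (oneAddPSqUnit p))) • ⟨_, hlog⟩, by
      rw [map_add, map_smul, map_smul, hΦval, hΦlog]; ext <;> simp [hc]⟩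
  rw [(LinearEquiv.ofBijective Φ ⟨hinj, hsurj⟩).finrank_eq, Module.finrank_prod,
    Module.finrank_self]

theorem finrank_contAddHomSpace_eq_two (p : ℕ) [Fact p.Prime] (E : Type)
    [NontriviallyNormedField E] [NormedAlgebra ℚ_[p] E] [FiniteDimensional ℚ_[p] E] :
    Module.finrank E (contAddHomSpace p E) = 2 :=
  finrank_contAddHomSpace_eq_two_general p E
end
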